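/- Fix E ∈ ℝ^{n×n} and indices 0 ≤ a ≤ i ≤ N, and regard F_a as a function of δ ∈ ℝ^{N+1} through the defining formula. Then the partial derivative of F_a with respect to δ_i exists at every δ with nonnegative entries and equals Φ(i+1, a)ᵀ (A_iᵀ F_{i+1} + F_{i+1} A_i) Φ(i+1, a), where Φ(i+1, a) and F_{i+1} are evaluated at δ. -/

import Mathlib

open Matrix

/-- Matrix exponential of a real square matrix. -/
noncomputable def expM {n : ℕ} (A : Matrix (Fin n) (Fin n) ℝ) : Matrix (Fin n) (Fin n) ℝ :=
  NormedSpace.exp A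

/-- Switching times: `tau δ i = ∑_{j<i} δ j`. -/
noncomputable def tau (δ : ℕ → ℝ) (i : ℕ) : ℝ := ∑ j ∈ Finset.range i, δ j

/-- State transition matrix `Φ(l, i) = exp(δ_{l-1} A_{l-1}) ⋯ exp(δ_i A_i)`
(ordered product, larger indices on the left; `Φ(i,i) = 1`). -/
noncomputable def Phi {n : ℕ} (A : ℕ → Matrix (Fin n) (Fin n) ℝ) (δ : ℕ → ℝ)
    (l i : ℕ) : Matrix (Fin n) (Fin n) ℝ :=
  (((List.range (l - i)).reverse).map (fun p => expM (δ (i + p) • A (i + p)))).prod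

/-- `M_q = ∫_0^{δ_q} exp(η A_q)ᵀ Q exp(η A_q) dη`, taken entrywise. -/
noncomputable def Mmat {n : ℕ} (A : ℕ → Matrix (Fin n) (Fin n) ℝ) (δ : ℕ → ℝ)
    (Q : Matrix (Fin n) (Fin n) ℝ) (q : ℕ) : Matrix (Fin n) (Fin n) ℝ :=
  Matrix.of fun k l => ∫ η in (0:ℝ)..δ q, ((expM (η • A q))ᵀ * Q * expM (η • A q)) k l

/-- `P_a = ∑_{q=a}^N Φ(q,a)ᵀ M_q Φ(q,a)`. -/
noncomputable def Pmat {n : ℕ} (N : ℕ) (A : ℕ → Matrix (Fin n) (Fin n) ℝ) (δ : ℕ → ℝ)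
    (Q : Matrix (Fin n) (Fin n) ℝ) (a : ℕ) : Matrix (Fin n) (Fin n) ℝ :=
  ∑ q ∈ Finset.Icc a N, (Phi A δ q a)ᵀ * Mmat A δ Q q * Phi A δ q a

/-- `F_a = Φ(N+1,a)ᵀ E Φ(N+1,a)`. -/
noncomputable def Fmat {n : ℕ} (N : ℕ) (A : ℕ → Matrix (Fin n) (Fin n) ℝ) (δ : ℕ → ℝ)
    (E : Matrix (Fin n) (Fin n) ℝ) (a : ℕ) : Matrix (Fin n) (Fin n) ℝ :=
  (Phi A δ (N + 1) a)ᵀ * E * Phi A δ (N + 1) a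

/-- `S_a = P_a + F_a`. -/
noncomputable def Smat {n : ℕ} (N : ℕ) (A : ℕ → Matrix (Fin n) (Fin n) ℝ) (δ : ℕ → ℝ)
    (Q E : Matrix (Fin n) (Fin n) ℝ) (a : ℕ) : Matrix (Fin n) (Fin n) ℝ :=
  Pmat N A δ Q a + Fmat N A δ E a

/-- A trajectory of the switched system: continuous on `[0, τ_{N+1}]`, starting at `x0`,
satisfying `x' = A_i x` on each open interval `(τ_i, τ_{i+1})`. -/
def IsTrajectory {n : ℕ} (N : ℕ) (A : ℕ → Matrix (Fin n) (Fin n) ℝ) (δ : ℕ → ℝ)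
    (x0 : Fin n → ℝ) (x : ℝ → Fin n → ℝ) : Prop :=
  ContinuousOn x (Set.Icc 0 (tau δ (N + 1))) ∧ x 0 = x0 ∧
    ∀ i ≤ N, ∀ t ∈ Set.Ioo (tau δ i) (tau δ (i + 1)),
      HasDerivAt x ((A i).mulVec (x t)) t

/-!
Only the factor `exp (δ_i A_i)` of `Φ(N+1, a) = Φ(N+1, i+1) exp (δ_i A_i) Φ(i, a)` depends on
`δ_i`, so with `C = Φ(i, a)` we get `F_a(δ_i := s) = (exp (s A_i) C)ᵀ F_{i+1} (exp (s A_i) C)`.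
The product rule and `d/ds exp (s A) = A exp (s A)` then give the formula.
-/

section MatrixCalculus

attribute [local instance] Matrix.linftyOpNormedAddCommGroup Matrix.linftyOpNormedSpace
  Matrix.linftyOpNormedRing Matrix.linftyOpNormedAlgebra

variable {m n : Type*} [Fintype m] [Fintype n] {t : ℝ}

theorem HasDerivAt.matrix_apply {f : ℝ → Matrix m n ℝ} {f' : Matrix m n ℝ}
    (hf : HasDerivAt f f' t) (k : m) (l : n) :
    HasDerivAt (fun s => f s k l) (f' k l) t :=
  (entryLinearMap ℝ ℝ k l).toContinuousLinearMap.hasFDerivAt.comp_hasDerivAt t hf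

theorem HasDerivAt.matrix_transpose {f : ℝ → Matrix m n ℝ} {f' : Matrix m n ℝ}
    (hf : HasDerivAt f f' t) : HasDerivAt (fun s => (f s)ᵀ) f'ᵀ t :=
  (transposeLinearEquiv m n ℝ ℝ).toLinearMap.toContinuousLinearMap.hasFDerivAt.comp_hasDerivAt
    t hf

variable [DecidableEq m]

theorem hasDerivAt_exp_smul_mul (A C : Matrix m m ℝ) (t : ℝ) :
    HasDerivAt (fun s : ℝ => NormedSpace.exp (s • A) * C)
      (A * (NormedSpace.exp (t • A) * C)) t := by
  have h := (hasDerivAt_exp_smul_const' A t).mul_const C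
  simp only [mul_assoc] at h
  -- `h` is about the `linftyOp` norm instances; they unfold to the generic ones in the goal.
  exact h

theorem HasDerivAt.transpose_mul_mul_self {f : ℝ → Matrix m m ℝ} {A : Matrix m m ℝ}
    (hf : HasDerivAt f (A * f t) t) (G : Matrix m m ℝ) :
    HasDerivAt (fun s => (f s)ᵀ * G * f s) ((f t)ᵀ * (Aᵀ * G + G * A) * f t) t :=
  ((hf.matrix_transpose.mul_const G).mul hf).congr_deriv <| by
    simp only [transpose_mul, mul_add, add_mul, mul_assoc]

end MatrixCalculus

section TransitionMatrix

variable {n : ℕ} (A : ℕ → Matrix (Fin n) (Fin n) ℝ) (δ : ℕ → ℝ)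

theorem Phi_self (a : ℕ) : Phi A δ a a = 1 := by
  simp [Phi]

theorem Phi_succ {a l : ℕ} (h : a ≤ l) : Phi A δ (l + 1) a = expM (δ l • A l) * Phi A δ l a := by
  have h1 : l + 1 - a = l - a + 1 := by omega
  have h2 : a + (l - a) = l := by omega
  simp [Phi, h1, List.range_succ, h2]

theorem Phi_trans {a m l : ℕ} (ham : a ≤ m) (hml : m ≤ l) :
    Phi A δ l a = Phi A δ l m * Phi A δ m a := by
  induction l, hml using Nat.le_induction with
  | base => rw [Phi_self, one_mul]
  | succ l hml ih => rw [Phi_succ A δ (ham.trans hml), Phi_succ A δ hml, ih, mul_assoc]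

variable {A δ} in
theorem Phi_congr {δ' : ℕ → ℝ} {a l : ℕ} (h : ∀ j, a ≤ j → j < l → δ j = δ' j) :
    Phi A δ l a = Phi A δ' l a := by
  induction l with
  | zero => simp [Phi]
  | succ l ih =>
    by_cases hal : a ≤ l
    · rw [Phi_succ A δ hal, Phi_succ A δ' hal, h l hal l.lt_succ_self,
        ih fun j hj hjl => h j hj (hjl.trans l.lt_succ_self)]
    · simp [Phi, show l + 1 - a = 0 by omega]

theorem Phi_update {a i l : ℕ} (hai : a ≤ i) (hil : i < l) (s : ℝ) :
    Phi A (Function.update δ i s) l a =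
      Phi A δ l (i + 1) * (expM (s • A i) * Phi A δ i a) := by
  rw [Phi_trans A _ (hai.trans i.le_succ) hil, Phi_succ A _ hai, Function.update_self,
    Phi_congr fun j _ _ => Function.update_of_ne (by omega) s δ,
    Phi_congr (δ' := δ) (l := i) fun j _ _ => Function.update_of_ne (by omega) s δ]

theorem Fmat_update {N a i : ℕ} (E : Matrix (Fin n) (Fin n) ℝ) (hai : a ≤ i) (hiN : i ≤ N)
    (s : ℝ) :
    Fmat N A (Function.update δ i s) E a =
      (expM (s • A i) * Phi A δ i a)ᵀ * Fmat N A δ E (i + 1) * (expM (s • A i) * Phi A δ i a) := by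
  simp only [Fmat, Phi_update A δ hai (Nat.lt_succ_of_le hiN), transpose_mul, mul_assoc]

end TransitionMatrix

theorem stmt8_general {n N : ℕ} (A : ℕ → Matrix (Fin n) (Fin n) ℝ) (δ : ℕ → ℝ)
    (E : Matrix (Fin n) (Fin n) ℝ)
    (a i : ℕ) (hai : a ≤ i) (hiN : i ≤ N) :
    ∀ k l : Fin n,
      HasDerivAt (fun s : ℝ => Fmat N A (Function.update δ i s) E a k l)
        (((Phi A δ (i + 1) a)ᵀ *
            ((A i)ᵀ * Fmat N A δ E (i + 1) + Fmat N A δ E (i + 1) * A i) *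
            Phi A δ (i + 1) a) k l) (δ i) := by
  intro k l
  simp only [Fmat_update A δ E hai hiN, Phi_succ A δ hai]
  exact ((hasDerivAt_exp_smul_mul (A i) (Phi A δ i a) (δ i)).transpose_mul_mul_self
    (Fmat N A δ E (i + 1))).matrix_apply k l

/-- the partial derivative of `F_a` with respect to `δ_i` exists (entrywise) at
every nonnegative `δ` and equals `Φ(i+1,a)ᵀ (A_iᵀ F_{i+1} + F_{i+1} A_i) Φ(i+1,a)`. -/
theorem stmt8 {n N : ℕ} (A : ℕ → Matrix (Fin n) (Fin n) ℝ) (δ : ℕ → ℝ)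
    (hδ : ∀ q ≤ N, 0 ≤ δ q) (E : Matrix (Fin n) (Fin n) ℝ)
    (a i : ℕ) (hai : a ≤ i) (hiN : i ≤ N) :
    ∀ k l : Fin n,
      HasDerivAt (fun s : ℝ => Fmat N A (Function.update δ i s) E a k l)
        (((Phi A δ (i + 1) a)ᵀ *
            ((A i)ᵀ * Fmat N A δ E (i + 1) + Fmat N A δ E (i + 1) * A i) *
            Phi A δ (i + 1) a) k l) (δ i) :=
  stmt8_general A δ E a i hai hiN
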